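/- In dimension d = 1, for the kernel χ_τ(t,r) = (2π)^{-1/2} ∫₀ʳ ∫₀^{t-r} (B_u - B_r)(iτ+s)^{-3/2} e^{-|B_r-B_u|²/(2(iτ+s))} ds du, there is a constant C such that |χ_τ(t,r)| ≤ C r for all 0 ≤ r ≤ t and all τ > 0, almost surely. Consequently the quadratic variation ∫₀ᵗ |χ_τ(t,r)|² dr ≤ C² t³/3 uniformly in τ. -/

import Mathlib

open MeasureTheory ProbabilityTheory Real Complex

/-- `b` is a standard one-dimensional Brownian motion. -/
def IsBrownian1 {Ω : Type*} [MeasureSpace Ω] (b : ℝ → Ω → ℝ) : Prop :=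
  (∀ ω, b 0 ω = 0) ∧
  (∀ ω, Continuous fun t => b t ω) ∧
  (∀ s t : ℝ, 0 ≤ s → s ≤ t → ∀ θ : ℝ,
    (∫ ω, Complex.exp (Complex.I * ((θ * (b t ω - b s ω) : ℝ) : ℂ)))
      = ((Real.exp (-(θ^2 * (t - s)) / 2) : ℝ) : ℂ)) ∧
  (∀ n : ℕ, ∀ u : Fin (n + 1) → ℝ, Monotone u →
    iIndepFun
      (fun i : Fin n => fun ω => b (u i.succ) ω - b (u i.castSucc) ω) ℙ)

/-- The kernel `χ_τ(t,r)` along a path `W`, in dimension one: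
`χ_τ(t,r) = (2π)^{-1/2} ∫₀ʳ ∫₀^{t-r} (W_u - W_r)(iτ+s)^{-3/2}
e^{-|W_r-W_u|²/(2(iτ+s))} ds du` (principal branch). -/
noncomputable def chi1 (τ t r : ℝ) (W : ℝ → ℝ) : ℂ :=
  ((2 * Real.pi : ℝ) : ℂ) ^ (-(1:ℂ)/2) *
    ∫ u in (0:ℝ)..r, ∫ s in (0:ℝ)..(t - r),
      ((W u - W r : ℝ) : ℂ) * (Complex.I * (τ:ℂ) + (s:ℂ)) ^ (-(3:ℂ)/2) *
        Complex.exp (-(((W r - W u : ℝ) : ℂ))^2 / (2 * (Complex.I * (τ:ℂ) + (s:ℂ))))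

/-! Everything holds path by path. With `x = W_u - W_r` fixed, the `s`-integrand has modulus
`|x| |z|^{-3/2} exp(-x² Re z / (2|z|²))` at `z = iτ + s`, where `Re z = s ≤ |z|`. For `s ≥ x²` this is
at most `|x| s^{-3/2}`, whose integral over `[x², ∞)` is `2`. For `s ≤ x²`, the bound
`e^{-y} ≤ y^{-3/4}` cancels the powers of `|z|` and leaves `2^{3/4} |x|^{-1/2} s^{-3/4}`, whose
integral over `[0, x²]` is at most `8`. Hence the inner integral is bounded by `10` uniformly in
`x`, `τ` and the length of the interval, so `|χ_τ(t,r)| ≤ 10 r`; squaring and integrating gives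
`10² t³/3`. -/

noncomputable def chiIntegrand (x : ℝ) (z : ℂ) : ℂ :=
  (x : ℂ) * z ^ (-(3:ℂ)/2) * Complex.exp (-(x:ℂ)^2 / (2 * z))

lemma norm_chiIntegrand (x : ℝ) (z : ℂ) :
    ‖chiIntegrand x z‖ = |x| * ‖z‖ ^ (-(3/2) : ℝ) * Real.exp (-(x^2 * z.re / (2 * ‖z‖^2))) := by
  have hexp : -(3:ℂ)/2 = ((-(3/2) : ℝ) : ℂ) := by push_cast; ring
  have hre : (-(x:ℂ)^2 / (2 * z)).re = -(x^2 * z.re / (2 * ‖z‖^2)) := by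
    rw [show -(x:ℂ)^2 / (2 * z) = ((-(x^2 / 2) : ℝ) : ℂ) * z⁻¹ by push_cast; ring,
      Complex.re_ofReal_mul, Complex.inv_re, Complex.normSq_eq_norm_sq]
    ring
  rw [chiIntegrand, norm_mul, norm_mul, Complex.norm_real, Real.norm_eq_abs, hexp,
    Complex.norm_cpow_real, Complex.norm_exp, hre]

lemma exp_neg_le_rpow_neg {a y : ℝ} (ha₀ : 0 ≤ a) (ha₁ : a ≤ 1) (hy : 0 < y) :
    Real.exp (-y) ≤ y ^ (-a) := by
  rcases le_total y 1 with h | h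
  · calc Real.exp (-y) ≤ 1 := Real.exp_le_one_iff.mpr (by linarith)
      _ ≤ y ^ (-a) := Real.one_le_rpow_of_pos_of_le_one_of_nonpos hy h (by linarith)
  · calc Real.exp (-y) ≤ y⁻¹ := by
          rw [Real.exp_neg]
          exact inv_anti₀ hy (by linarith [Real.add_one_le_exp y])
      _ = y ^ (-1 : ℝ) := (Real.rpow_neg_one y).symm
      _ ≤ y ^ (-a) := Real.rpow_le_rpow_of_exponent_le h (by linarith)

lemma norm_chiIntegrand_le_abs_mul_re_rpow (x : ℝ) {z : ℂ} (hz : 0 < z.re) :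
    ‖chiIntegrand x z‖ ≤ |x| * z.re ^ (-(3/2) : ℝ) := by
  rw [norm_chiIntegrand]
  have hexp : Real.exp (-(x^2 * z.re / (2 * ‖z‖^2))) ≤ 1 :=
    Real.exp_le_one_iff.mpr (neg_nonpos.mpr (by positivity))
  have hnorm : ‖z‖ ^ (-(3/2) : ℝ) ≤ z.re ^ (-(3/2) : ℝ) :=
    Real.rpow_le_rpow_of_nonpos hz (Complex.re_le_norm z) (by norm_num)
  calc |x| * ‖z‖ ^ (-(3/2) : ℝ) * Real.exp (-(x^2 * z.re / (2 * ‖z‖^2)))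
      ≤ |x| * z.re ^ (-(3/2) : ℝ) * 1 := by gcongr
    _ = |x| * z.re ^ (-(3/2) : ℝ) := mul_one _

lemma norm_chiIntegrand_le_abs_rpow_mul_re_rpow {x : ℝ} {z : ℂ} (hx : x ≠ 0) (hz : 0 < z.re) :
    ‖chiIntegrand x z‖ ≤ 2 ^ (3/4 : ℝ) * |x| ^ (-(1/2) : ℝ) * z.re ^ (-(3/4) : ℝ) := by
  set N := ‖z‖
  have hN : 0 < N := hz.trans_le (Complex.re_le_norm z)
  have hx' : 0 < |x| := abs_pos.mpr hx
  have hy : 0 < x^2 * z.re / (2 * N^2) := by positivity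
  rw [norm_chiIntegrand]
  refine (mul_le_mul_of_nonneg_left (exp_neg_le_rpow_neg (a := 3/4) (by norm_num) (by norm_num) hy)
    (by positivity)).trans_eq ?_
  -- both sides are positive, so it suffices to compare logarithms, where the powers of `N` cancel
  refine Real.log_injOn_pos (Set.mem_Ioi.mpr (by positivity)) (Set.mem_Ioi.mpr (by positivity)) ?_
  have hlog_y : Real.log (x^2 * z.re / (2 * N^2)) =
      2 * Real.log |x| + Real.log z.re - Real.log 2 - 2 * Real.log N := by
    rw [← sq_abs x, Real.log_div (by positivity) (by positivity),
      Real.log_mul (by positivity) hz.ne', Real.log_mul two_ne_zero (by positivity),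
      Real.log_pow, Real.log_pow]
    push_cast; ring
  rw [Real.log_mul (by positivity) (by positivity), Real.log_mul hx'.ne' (by positivity),
    Real.log_mul (by positivity) (by positivity), Real.log_mul (by positivity) (by positivity),
    Real.log_rpow hN, Real.log_rpow hy, Real.log_rpow two_pos, Real.log_rpow hx',
    Real.log_rpow hz, hlog_y]
  ring

lemma continuousOn_chiIntegrand (x : ℝ) : ContinuousOn (chiIntegrand x) Complex.slitPlane := by
  have hne : ∀ z ∈ Complex.slitPlane, (2 : ℂ) * z ≠ 0 := fun z hz =>
    mul_ne_zero two_ne_zero (Complex.slitPlane_ne_zero hz)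
  exact (continuousOn_const.mul (continuousOn_id.cpow_const fun z hz => hz)).mul
    (Complex.continuous_exp.comp_continuousOn (continuousOn_const.div
      (continuousOn_const.mul continuousOn_id) hne))

lemma re_I_mul_add (τ s : ℝ) : (Complex.I * τ + s).re = s := by simp

section VerticalLine

variable {τ : ℝ}

lemma continuous_chiIntegrand_I_mul_add (hτ : 0 < τ) (x : ℝ) :
    Continuous fun s : ℝ => chiIntegrand x (Complex.I * τ + s) :=
  (continuousOn_chiIntegrand x).comp_continuous (by fun_prop) fun s =>
    Complex.mem_slitPlane_iff.mpr (Or.inr (by simpa using hτ.ne'))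

lemma norm_integral_chiIntegrand_le_of_le_sq {x c : ℝ} (hx : x ≠ 0) (hc : 0 ≤ c)
    (hcx : c ≤ x^2) : ‖∫ s in (0:ℝ)..c, chiIntegrand x (Complex.I * τ + s)‖ ≤ 8 := by
  have hx' : 0 < |x| := abs_pos.mpr hx
  set K : ℝ := 2 ^ (3/4 : ℝ) * |x| ^ (-(1/2) : ℝ)
  have hbound : ∀ᵐ s, s ∈ Set.Ioc 0 c →
      ‖chiIntegrand x (Complex.I * τ + s)‖ ≤ K * s ^ (-(3/4) : ℝ) := by
    refine Filter.Eventually.of_forall fun s hs => ?_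
    have h := norm_chiIntegrand_le_abs_rpow_mul_re_rpow hx (z := Complex.I * τ + s)
      (by rw [re_I_mul_add]; exact hs.1)
    rwa [re_I_mul_add] at h
  refine (intervalIntegral.norm_integral_le_of_norm_le hc hbound
    ((intervalIntegral.intervalIntegrable_rpow' (by norm_num)).const_mul K)).trans ?_
  have hc4 : c ^ (1/4 : ℝ) ≤ |x| ^ (1/2 : ℝ) := by
    calc c ^ (1/4 : ℝ) ≤ (|x| ^ 2) ^ (1/4 : ℝ) := by gcongr; rwa [sq_abs]
      _ = |x| ^ (1/2 : ℝ) := by rw [← Real.rpow_natCast, ← Real.rpow_mul hx'.le]; norm_num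
  have h2 : (2:ℝ) ^ (3/4 : ℝ) ≤ 2 :=
    (Real.rpow_le_rpow_of_exponent_le one_le_two (by norm_num)).trans_eq (Real.rpow_one 2)
  rw [intervalIntegral.integral_const_mul, integral_rpow (Or.inl (by norm_num)),
    Real.zero_rpow (by norm_num), sub_zero]
  calc K * (c ^ (-(3/4) + 1 : ℝ) / (-(3/4) + 1))
      = 4 * 2 ^ (3/4 : ℝ) * (|x| ^ (-(1/2) : ℝ) * c ^ (1/4 : ℝ)) := by norm_num [K]; ring
    _ ≤ 4 * 2 * (|x| ^ (-(1/2) : ℝ) * |x| ^ (1/2 : ℝ)) := by gcongr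
    _ = 8 := by rw [← Real.rpow_add hx']; norm_num

lemma norm_integral_chiIntegrand_of_sq_le {x T : ℝ} (hx : x ≠ 0) (hT : x^2 ≤ T) :
    ‖∫ s in (x^2)..T, chiIntegrand x (Complex.I * τ + s)‖ ≤ 2 := by
  have hx' : 0 < |x| := abs_pos.mpr hx
  have hx2 : 0 < x^2 := by positivity
  have h0 : (0:ℝ) ∉ Set.uIcc (x^2) T := by
    rw [Set.uIcc_of_le hT]; exact fun h => hx2.not_ge h.1
  have hbound : ∀ᵐ s, s ∈ Set.Ioc (x^2) T →
      ‖chiIntegrand x (Complex.I * τ + s)‖ ≤ |x| * s ^ (-(3/2) : ℝ) := by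
    refine Filter.Eventually.of_forall fun s hs => ?_
    have h := norm_chiIntegrand_le_abs_mul_re_rpow x (z := Complex.I * τ + s)
      (by rw [re_I_mul_add]; exact hx2.trans hs.1)
    rwa [re_I_mul_add] at h
  refine (intervalIntegral.norm_integral_le_of_norm_le hT hbound
    ((intervalIntegral.intervalIntegrable_rpow (Or.inr h0)).const_mul |x|)).trans ?_
  have hx2' : (x^2) ^ (-(1/2) : ℝ) = |x|⁻¹ := by
    rw [← sq_abs, ← Real.rpow_natCast, ← Real.rpow_mul hx'.le]; norm_num [Real.rpow_neg_one]
  rw [intervalIntegral.integral_const_mul, integral_rpow (Or.inr ⟨by norm_num, h0⟩)]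
  calc |x| * ((T ^ (-(3/2) + 1 : ℝ) - (x^2) ^ (-(3/2) + 1 : ℝ)) / (-(3/2) + 1))
      = 2 * (|x| * |x|⁻¹) - 2 * |x| * T ^ (-(1/2) : ℝ) := by norm_num [hx2']; ring
    _ ≤ 2 * (|x| * |x|⁻¹) :=
        sub_le_self _ (mul_nonneg (by positivity) (Real.rpow_nonneg (hx2.le.trans hT) _))
    _ = 2 := by rw [mul_inv_cancel₀ hx'.ne', mul_one]

lemma norm_integral_chiIntegrand_le (hτ : 0 < τ) (x : ℝ) {T : ℝ} (hT : 0 ≤ T) :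
    ‖∫ s in (0:ℝ)..T, chiIntegrand x (Complex.I * τ + s)‖ ≤ 10 := by
  rcases eq_or_ne x 0 with rfl | hx
  · simp [chiIntegrand]
  rcases le_or_gt T (x^2) with hTx | hxT
  · exact (norm_integral_chiIntegrand_le_of_le_sq hx hT hTx).trans (by norm_num)
  have hint := (continuous_chiIntegrand_I_mul_add hτ x).intervalIntegrable (μ := volume)
  rw [← intervalIntegral.integral_add_adjacent_intervals (hint 0 (x^2)) (hint (x^2) T)]
  calc _ ≤ _ := norm_add_le _ _
    _ ≤ 8 + 2 := add_le_add (norm_integral_chiIntegrand_le_of_le_sq hx (sq_nonneg x) le_rfl)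
        (norm_integral_chiIntegrand_of_sq_le hx hxT.le)
    _ = 10 := by norm_num

end VerticalLine

lemma chi1_eq (τ t r : ℝ) (W : ℝ → ℝ) :
    chi1 τ t r W = ((2 * Real.pi : ℝ) : ℂ) ^ (-(1:ℂ)/2) *
      ∫ u in (0:ℝ)..r, ∫ s in (0:ℝ)..(t - r), chiIntegrand (W u - W r) (Complex.I * τ + s) := by
  have hsq : ∀ u, ((W r - W u : ℝ) : ℂ)^2 = ((W u - W r : ℝ) : ℂ)^2 := fun u => by
    push_cast; ring
  simp only [chi1, chiIntegrand, hsq]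

lemma norm_chi1_le {τ t r : ℝ} (hτ : 0 < τ) (hr : 0 ≤ r) (hrt : r ≤ t) (W : ℝ → ℝ) :
    ‖chi1 τ t r W‖ ≤ 10 * r := by
  have hconst : ‖((2 * Real.pi : ℝ) : ℂ) ^ (-(1:ℂ)/2)‖ ≤ 1 := by
    rw [Complex.norm_cpow_eq_rpow_re_of_pos (by positivity)]
    exact Real.rpow_le_one_of_one_le_of_nonpos (by nlinarith [Real.pi_gt_three]) (by norm_num)
  have hinner : ‖∫ u in (0:ℝ)..r, ∫ s in (0:ℝ)..(t - r),
      chiIntegrand (W u - W r) (Complex.I * τ + s)‖ ≤ 10 * r := by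
    refine (intervalIntegral.norm_integral_le_of_norm_le_const (a := 0) (b := r)
      fun u _ => norm_integral_chiIntegrand_le hτ (W u - W r) (sub_nonneg.mpr hrt)).trans_eq ?_
    rw [sub_zero, abs_of_nonneg hr, mul_comm]
  rw [chi1_eq, norm_mul]
  simpa using mul_le_mul hconst hinner (norm_nonneg _) zero_le_one

lemma integral_norm_sq_le_of_norm_le_mul {E : Type*} [NormedAddCommGroup E] {f : ℝ → E}
    {C t : ℝ} (ht : 0 ≤ t) (hf : ∀ r ∈ Set.Icc 0 t, ‖f r‖ ≤ C * r) :
    ∫ r in (0:ℝ)..t, ‖f r‖^2 ≤ C^2 * t^3 / 3 := by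
  by_cases hint : IntervalIntegrable (fun r => ‖f r‖^2) volume 0 t
  · calc ∫ r in (0:ℝ)..t, ‖f r‖^2 ≤ ∫ r in (0:ℝ)..t, C^2 * r^2 :=
          intervalIntegral.integral_mono_on ht hint
            ((continuous_const.mul (continuous_pow 2)).intervalIntegrable _ _) fun r hr => by
            rw [← mul_pow]; exact pow_le_pow_left₀ (norm_nonneg _) (hf r hr) 2
      _ = C^2 * t^3 / 3 := by simp [integral_pow]; ring
  · rw [intervalIntegral.integral_undef hint]
    positivity

theorem stmt14_general {Ω : Type*} [MeasureSpace Ω]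
    (B : ℝ → Ω → ℝ) (t : ℝ) (ht : 0 < t) :
    ∃ C : ℝ, 0 < C ∧ ∀ τ : ℝ, 0 < τ →
      ∀ᵐ ω ∂(ℙ : Measure Ω),
        (∀ r ∈ Set.Icc (0:ℝ) t, ‖chi1 τ t r (fun u => B u ω)‖ ≤ C * r) ∧
        (∫ r in (0:ℝ)..t, ‖chi1 τ t r (fun u => B u ω)‖^2) ≤ C^2 * t^3 / 3 := by
  refine ⟨10, by norm_num, fun τ hτ => ae_of_all _ fun ω => ?_⟩
  have hchi : ∀ r ∈ Set.Icc (0:ℝ) t, ‖chi1 τ t r (fun u => B u ω)‖ ≤ 10 * r :=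
    fun r hr => norm_chi1_le hτ hr.1 hr.2 _
  exact ⟨hchi, integral_norm_sq_le_of_norm_le_mul ht.le hchi⟩

/-- In `d = 1` there is a constant `C` such that `|χ_τ(t,r)| ≤ C r` for all `0 ≤ r ≤ t` and
`τ > 0`, almost surely; consequently `∫₀ᵗ |χ_τ(t,r)|² dr ≤ C² t³/3` uniformly in `τ`. -/
theorem stmt14 {Ω : Type*} [MeasureSpace Ω] [IsProbabilityMeasure (ℙ : Measure Ω)]
    (B : ℝ → Ω → ℝ) (hB : IsBrownian1 B) (t : ℝ) (ht : 0 < t) :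
    ∃ C : ℝ, 0 < C ∧ ∀ τ : ℝ, 0 < τ →
      ∀ᵐ ω ∂(ℙ : Measure Ω),
        (∀ r ∈ Set.Icc (0:ℝ) t, ‖chi1 τ t r (fun u => B u ω)‖ ≤ C * r) ∧
        (∫ r in (0:ℝ)..t, ‖chi1 τ t r (fun u => B u ω)‖^2) ≤ C^2 * t^3 / 3 :=
  stmt14_general B t ht
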